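/- For every d ≥ 9, ⌊(d+1)/2⌋·(d − ⌊(d+1)/2⌋) + d < M(d) + d, where M(d) = 3^k if d = 3k, 4·3^{k-1} if d = 3k+1, and 2·3^k if d = 3k+2. Consequently, for each d ≥ 9 there exists a finite poset P on [d] whose chain polytope C(P) has strictly more facets than the maximum possible number of facets of any order polytope of a poset on [d]. -/

import Mathlib

/-!
Adjoin a bottom and a top to the poset `P`. Its minimal elements, its maximal elements and its
cover relations then all become cover relations of the bounded poset, i.e. edges of the Hasse
diagram of a poset on `d + 2` elements. A Hasse diagram is triangle-free, so by Mantel's theorem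
it has at most `(d + 2)² / 4` edges.

Stacking antichains of size three (the last one of size `d % 3`) gives a poset whose maximal
chains are the choices of one element per level, so it has `3 ^ ⌊d/3⌋ · max 1 (d % 3)` of them;
for `d ≥ 9` this exceeds both `⌊(d+1)/2⌋ · ⌊d/2⌋` and `(d + 2)² / 4 - d`.
-/

/-- `b` covers `a` in the partial order `r`. -/
def covRel {α : Type*} (r : α → α → Prop) (a b : α) : Prop :=
  r a b ∧ a ≠ b ∧ ∀ c, r a c → r c b → c = a ∨ c = b

open Finset

theorem SimpleGraph.CliqueFree.card_edgeFinset_le_sq_div_four {V : Type*} [Fintype V]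
    {G : SimpleGraph V} [DecidableRel G.Adj] (h : G.CliqueFree 3) :
    #G.edgeFinset ≤ Fintype.card V ^ 2 / 4 := by
  have hn : (Fintype.card V % 2).choose 2 = 0 := Nat.choose_eq_zero_of_lt (Nat.mod_lt _ two_pos)
  calc #G.edgeFinset ≤ _ := h.card_edgeFinset_le (r := 2)
    _ ≤ Fintype.card V ^ 2 / 4 := by
      rw [hn, add_zero, Nat.add_one_sub_one, mul_one]
      exact Nat.div_le_div_right (Nat.sub_le _ _)

section Covers

variable {α : Type*} [PartialOrder α] [Fintype α]

theorem card_covBy_le_sq_div_four :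
    Nat.card {p : α × α // p.1 ⋖ p.2} ≤ Fintype.card α ^ 2 / 4 := by
  classical
  let toEdge (p : {p : α × α // p.1 ⋖ p.2}) : (SimpleGraph.hasse α).edgeFinset :=
    ⟨s(p.1.1, p.1.2), by simp [SimpleGraph.hasse_adj, p.2]⟩
  have hinj : Function.Injective toEdge := by
    rintro ⟨⟨a, b⟩, hab⟩ ⟨⟨c, d⟩, hcd⟩ h
    simp only [toEdge, Subtype.mk.injEq, Sym2.eq_iff] at h
    rcases h with ⟨rfl, rfl⟩ | ⟨rfl, rfl⟩
    · rfl
    · exact absurd hab.lt hcd.lt.not_gt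
  calc Nat.card {p : α × α // p.1 ⋖ p.2} ≤ #(SimpleGraph.hasse α).edgeFinset := by
        rw [← Nat.card_eq_finsetCard]
        exact Nat.card_le_card_of_injective toEdge hinj
    _ ≤ Fintype.card α ^ 2 / 4 :=
        SimpleGraph.cliqueFree_hasse_three.card_edgeFinset_le_sq_div_four

theorem card_isMin_add_card_isMax_add_card_covBy_le :
    Nat.card {a : α // IsMin a} + Nat.card {a : α // IsMax a} +
      Nat.card {p : α × α // p.1 ⋖ p.2} ≤ (Fintype.card α + 2) ^ 2 / 4 := by
  let toCover : {a : α // IsMin a} ⊕ {a : α // IsMax a} ⊕ {p : α × α // p.1 ⋖ p.2} →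
      {p : WithTop (WithBot α) × WithTop (WithBot α) // p.1 ⋖ p.2}
    | .inl a => ⟨(↑(⊥ : WithBot α), ↑(a.1 : WithBot α)),
        WithTop.coe_covBy_coe.2 (WithBot.bot_covBy_coe.2 a.2)⟩
    | .inr (.inl a) => ⟨(↑(a.1 : WithBot α), ⊤), WithTop.coe_covBy_top.2 a.2.withBot⟩
    | .inr (.inr p) => ⟨(↑(p.1.1 : WithBot α), ↑(p.1.2 : WithBot α)), by simpa using p.2⟩
  have hinj : Function.Injective toCover := by
    rintro (a | a | p) (b | b | q) h <;> simp_all [toCover, Subtype.ext_iff, Prod.ext_iff]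
  have hle := Nat.card_le_card_of_injective toCover hinj
  rw [Nat.card_sum, Nat.card_sum, ← add_assoc] at hle
  grw [hle, card_covBy_le_sq_div_four]
  change Fintype.card (Option (Option α)) ^ 2 / 4 ≤ _
  rw [Fintype.card_option, Fintype.card_option]

end Covers

theorem covRel_le_iff_covBy {α : Type*} [PartialOrder α] {a b : α} :
    covRel (· ≤ ·) a b ↔ a ⋖ b := by
  rw [covBy_iff_lt_and_eq_or_eq, lt_iff_le_and_ne, and_assoc]
  rfl

theorem card_minimal_add_card_maximal_add_card_covRel_le {α : Type*} [Fintype α]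
    (r : α → α → Prop) [IsPartialOrder α r] :
    Nat.card {a : α // ∀ b, r b a → b = a} + Nat.card {a : α // ∀ b, r a b → b = a} +
      Nat.card {p : α × α // covRel r p.1 p.2} ≤ (Fintype.card α + 2) ^ 2 / 4 := by
  let : PartialOrder α :=
    { le := r, le_refl := refl_of r, le_trans := fun _ _ _ => trans_of r,
      le_antisymm := fun _ _ => antisymm_of r }
  have hmin (a : α) : (∀ b, r b a → b = a) ↔ IsMin a :=
    ⟨fun h b hb => (h b hb).ge, fun h _ hb => h.eq_of_le hb⟩
  have hmax (a : α) : (∀ b, r a b → b = a) ↔ IsMax a :=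
    ⟨fun h b hb => (h b hb).le, fun h _ hb => h.eq_of_ge hb⟩
  rw [Nat.card_congr (Equiv.subtypeEquivRight hmin),
    Nat.card_congr (Equiv.subtypeEquivRight hmax),
    Nat.card_congr (Equiv.subtypeEquivRight (p := fun p : α × α => covRel r p.1 p.2)
      fun _ => covRel_le_iff_covBy)]
  exact card_isMin_add_card_isMax_add_card_covBy_le

section LevelOrder

variable {α : Type*} (f : α → ℕ)

def levelRel (a b : α) : Prop := a = b ∨ f a < f b

instance : IsPartialOrder α (levelRel f) where
  refl _ := .inl rfl
  trans := by
    rintro a b c (rfl | hab) (rfl | hbc)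
    exacts [.inl rfl, .inr hbc, .inr hab, .inr (hab.trans hbc)]
  antisymm := by
    rintro a b (rfl | hab) (hba | hba)
    exacts [rfl, rfl, hba.symm, absurd hab hba.not_gt]

variable {f}

theorem isMaxChain_levelRel {C : Set α} (hinj : C.InjOn f) (hsurj : ∀ a, ∃ c ∈ C, f c = f a) :
    IsMaxChain (levelRel f) C := by
  refine ⟨fun x hx y hy hxy => ?_, fun t ht hCt => hCt.antisymm fun y hy => ?_⟩
  · rcases lt_trichotomy (f x) (f y) with h | h | h
    exacts [.inl (.inr h), absurd (hinj hx hy h) hxy, .inr (.inr h)]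
  · obtain ⟨c, hc, hcy⟩ := hsurj y
    by_contra hyC
    have hyc : y ≠ c := fun h => hyC (h ▸ hc)
    rcases ht hy (hCt hc) hyc with (h | h) | (h | h)
    exacts [hyc h, hcy.not_gt h, hyc h.symm, hcy.not_lt h]

end LevelOrder

section Triples

variable {d : ℕ}

theorem isMaxChain_setOf_mod_three {s : ℕ → ℕ} (hs : ∀ i, s i < 3)
    (hsd : ∀ i, 3 * i < d → 3 * i + s i < d) :
    IsMaxChain (levelRel fun x : Fin d => (x : ℕ) / 3) {x | (x : ℕ) % 3 = s (x / 3)} := by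
  refine isMaxChain_levelRel (fun x hx y hy hxy => ?_) fun a => ?_
  · simp only [Set.mem_ofPred_eq] at hx hy hxy
    rw [hxy] at hx
    exact Fin.ext (by omega)
  · have hi : 3 * ((a : ℕ) / 3) < d := by omega
    refine ⟨⟨_, hsd _ hi⟩, ?_, ?_⟩ <;> simp only [Set.mem_ofPred_eq] <;> grind

theorem eq_of_setOf_mod_three_eq {s s' : ℕ → ℕ} (hs : ∀ i, s i < 3)
    (hsd : ∀ i, 3 * i < d → 3 * i + s i < d)
    (h : {x : Fin d | (x : ℕ) % 3 = s (x / 3)} = {x : Fin d | (x : ℕ) % 3 = s' (x / 3)})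
    {i : ℕ} (hi : 3 * i < d) : s i = s' i := by
  have hmem : (⟨3 * i + s i, hsd i hi⟩ : Fin d) ∈ {x : Fin d | (x : ℕ) % 3 = s (x / 3)} := by
    simp only [Set.mem_ofPred_eq]
    grind
  rw [h] at hmem
  simp only [Set.mem_ofPred_eq] at hmem
  grind

theorem pow_mul_le_card_isMaxChain :
    3 ^ (d / 3) * max 1 (d % 3) ≤
      Nat.card {C : Set (Fin d) // IsMaxChain (levelRel fun x : Fin d => (x : ℕ) / 3) C} := by
  let sel (p : (Fin (d / 3) → Fin 3) × Fin (max 1 (d % 3))) (i : ℕ) : ℕ :=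
    if h : i < d / 3 then p.1 ⟨i, h⟩ else p.2
  have hsel (p) (i) : sel p i < 3 := by
    unfold sel; split <;> omega
  have hseld (p) (i) (hi : 3 * i < d) : 3 * i + sel p i < d := by
    unfold sel; split <;> omega
  let chain (p) : {C : Set (Fin d) // IsMaxChain (levelRel fun x : Fin d => (x : ℕ) / 3) C} :=
    ⟨_, isMaxChain_setOf_mod_three (hsel p) (hseld p)⟩
  have hinj : Function.Injective chain := by
    intro p p' h
    have hs {i} : 3 * i < d → sel p i = sel p' i :=
      eq_of_setOf_mod_three_eq (hsel p) (hseld p) (congrArg Subtype.val h)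
    refine Prod.ext (funext fun i => Fin.ext ?_) (Fin.ext ?_)
    · simpa [sel] using hs (i := i) (by omega)
    · by_cases hq : 3 * (d / 3) < d
      · simpa [sel] using hs hq
      · omega
  calc 3 ^ (d / 3) * max 1 (d % 3)
      = Nat.card ((Fin (d / 3) → Fin 3) × Fin (max 1 (d % 3))) := by simp
    _ ≤ _ := Nat.card_le_card_of_injective chain hinj

end Triples

theorem sq_three_mul_add_three_le {k : ℕ} (hk : 3 ≤ k) : (3 * k + 3) ^ 2 ≤ 4 * 3 ^ k + 36 := by
  induction k, hk using Nat.le_induction with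
  | base => norm_num
  | succ k hk ih => rw [pow_succ 3]; nlinarith

theorem sq_add_two_lt_four_mul {d : ℕ} (hd : 9 ≤ d) :
    (d + 2) ^ 2 < 4 * (d + 3 ^ (d / 3) * max 1 (d % 3)) := by
  obtain ⟨k, r, hr, rfl⟩ : ∃ k r, r < 3 ∧ d = 3 * k + r :=
    ⟨d / 3, d % 3, Nat.mod_lt _ three_pos, (Nat.div_add_mod d 3).symm⟩
  have hk : 3 ≤ k := by omega
  have hkey := sq_three_mul_add_three_le hk
  rw [show (3 * k + r) / 3 = k by omega, show (3 * k + r) % 3 = r by omega]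
  interval_cases r <;> norm_num <;> nlinarith

theorem half_mul_lt_pow_mul {d : ℕ} (hd : 9 ≤ d) :
    (d + 1) / 2 * (d - (d + 1) / 2) < 3 ^ (d / 3) * max 1 (d % 3) := by
  have hamgm := four_mul_le_sq_add ((d + 1) / 2) (d - (d + 1) / 2)
  rw [Nat.add_sub_cancel' (by omega)] at hamgm
  nlinarith [sq_add_two_lt_four_mul hd]

/-- for `d ≥ 9` the maximal facet number of order polytopes,
`⌊(d+1)/2⌋·(d − ⌊(d+1)/2⌋) + d`, is strictly less than `M(d) + d`; consequently some
poset on `[d]` has a chain polytope with more facets (`d` plus the number of maximal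
chains) than the number of facets (`m⋆ + m⋆ + |E|`) of any order polytope on `[d]`. -/
theorem stmt_9 (d k : ℕ) (hd : 9 ≤ d) :
    ((d = 3 * k → ((d + 1) / 2) * (d - (d + 1) / 2) + d < 3 ^ k + d) ∧
     (d = 3 * k + 1 → ((d + 1) / 2) * (d - (d + 1) / 2) + d < 4 * 3 ^ (k - 1) + d) ∧
     (d = 3 * k + 2 → ((d + 1) / 2) * (d - (d + 1) / 2) + d < 2 * 3 ^ k + d)) ∧
    (∃ r : Fin d → Fin d → Prop, IsPartialOrder (Fin d) r ∧
      ∀ r' : Fin d → Fin d → Prop, IsPartialOrder (Fin d) r' →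
        Nat.card {a : Fin d // ∀ b, r' b a → b = a} +
          Nat.card {a : Fin d // ∀ b, r' a b → b = a} +
          Nat.card {p : Fin d × Fin d // covRel r' p.1 p.2} <
        d + Nat.card {C : Set (Fin d) // IsMaxChain r C}) := by
  have hhalf := half_mul_lt_pow_mul hd
  refine ⟨⟨fun h => ?_, fun h => ?_, fun h => ?_⟩, levelRel fun x : Fin d => (x : ℕ) / 3,
    inferInstance, fun r' _ => ?_⟩
  · subst h
    rw [show 3 * k / 3 = k by omega, show max 1 (3 * k % 3) = 1 by omega] at hhalf
    omega
  · subst h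
    have hpow : 3 ^ k = 3 * 3 ^ (k - 1) := by rw [← pow_succ']; congr 1; omega
    rw [show (3 * k + 1) / 3 = k by omega, show max 1 ((3 * k + 1) % 3) = 1 by omega] at hhalf
    omega
  · subst h
    rw [show (3 * k + 2) / 3 = k by omega, show max 1 ((3 * k + 2) % 3) = 2 by omega] at hhalf
    omega
  · calc _ ≤ (Fintype.card (Fin d) + 2) ^ 2 / 4 :=
          card_minimal_add_card_maximal_add_card_covRel_le r'
      _ < d + 3 ^ (d / 3) * max 1 (d % 3) := by
          have := sq_add_two_lt_four_mul hd
          rw [Fintype.card_fin]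
          omega
      _ ≤ _ := by grw [pow_mul_le_card_isMaxChain]
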